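/- The Lenard relation π_3 ∇H_1 = π_2 ∇H_2 holds on ℝ^N, where H_1 = Σ u_i, H_2 = Σ u_i²/2 + Σ u_i u_{i+1}, π_2 is the quadratic bracket {u_i,u_{i+1}} = u_i u_{i+1}, and π_3 is the cubic bracket {u_i,u_{i+1}} = u_i u_{i+1}(u_i + u_{i+1}), {u_i,u_{i+2}} = u_i u_{i+1} u_{i+2}. -/

import Mathlib

/-- Partial derivative of a function on `ℝ^ℕ` with respect to the `k`-th coordinate. -/
noncomputable def pd (f : (ℕ → ℝ) → ℝ) (k : ℕ) (u : ℕ → ℝ) : ℝ :=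
  deriv (fun x => f (Function.update u k x)) (u k)

/-- The quadratic Poisson bivector `π₂`. -/
noncomputable def pi2Biv (u : ℕ → ℝ) (i j : ℕ) : ℝ :=
  if j = i + 1 then u i * u j
  else if i = j + 1 then -(u i * u j)
  else 0

/-- The cubic Poisson bivector `π₃`. -/
noncomputable def pi3Biv (u : ℕ → ℝ) (i j : ℕ) : ℝ :=
  if j = i + 1 then u i * u j * (u i + u j)
  else if i = j + 1 then -(u j * u i * (u j + u i))
  else if j = i + 2 then u i * u (i + 1) * u j
  else if i = j + 2 then -(u j * u (j + 1) * u i)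
  else 0

/-! The gradient of `H₁` is `(1, …, 1)` and that of `H₂` has `j`-th entry
`u_{j-1} + u_j + u_{j+1}`, so the `i`-th components of both sides are sums over the bands of `π₃`
and `π₂` and collapse to a few cubic monomials around `u_i`. The boundary conditions
`u₀ = u_{N+1} = 0` kill exactly the terms whose index leaves `1, …, N`, and the two resulting
cubic expressions agree identically. -/

open Finset

theorem Finset.sum_ite_eq_of_imp_eq_zero {ι M : Type*} [DecidableEq ι] [AddCommMonoid M]
    {s : Finset ι} {a : ι} {b : ι → M} (h : a ∉ s → b a = 0) :
    ∑ x ∈ s, (if x = a then b x else 0) = b a := by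
  rw [sum_ite_eq', ite_eq_left_iff]
  exact fun ha => (h ha).symm

lemma apply_eq_zero_of_notMem_Icc {N : ℕ} {u : ℕ → ℝ} (hu0 : u 0 = 0) (huN : u (N + 1) = 0)
    {k : ℕ} (hk : k ∉ Icc 1 N) (hkN : k ≤ N + 1) : u k = 0 := by
  rw [mem_Icc] at hk
  obtain rfl | rfl : k = 0 ∨ k = N + 1 := by omega
  exacts [hu0, huN]

lemma hasDerivAt_update_apply {ι : Type*} [DecidableEq ι] (u : ι → ℝ) (j k : ι) :
    HasDerivAt (fun x => Function.update u j x k) (if k = j then 1 else 0) (u j) := by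
  rcases eq_or_ne k j with rfl | h
  · simpa using hasDerivAt_id' (u k)
  · simpa [h] using hasDerivAt_const (u j) (u k)

lemma pd_sum_apply {s : Finset ℕ} {j : ℕ} (hj : j ∈ s) (u : ℕ → ℝ) :
    pd (fun v => ∑ k ∈ s, v k) j u = 1 := by
  rw [pd, (HasDerivAt.fun_sum fun k _ => hasDerivAt_update_apply u j k).deriv,
    sum_ite_eq_of_mem' _ _ _ hj]

lemma pd_sum_sq_half_add_sum_mul_succ {N : ℕ} {u : ℕ → ℝ} (hu0 : u 0 = 0)
    (huN : u (N + 1) = 0) {j : ℕ} (hj : j ∈ Icc 1 N) :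
    pd (fun v => (∑ k ∈ Icc 1 N, (v k) ^ 2 / 2) + ∑ k ∈ Icc 1 (N - 1), v k * v (k + 1)) j u
      = u (j - 1) + u j + u (j + 1) := by
  have hj' := mem_Icc.1 hj
  have hsq : ∀ k, HasDerivAt (fun x => Function.update u j x k ^ 2 / 2)
      (if k = j then u k else 0) (u j) := fun k => by
    refine (((hasDerivAt_update_apply u j k).fun_pow 2).div_const 2).congr_deriv ?_
    split_ifs <;> simp_all
  have hmul : ∀ k, HasDerivAt (fun x => Function.update u j x k * Function.update u j x (k + 1))
      ((if k = j then u (k + 1) else 0) + (if k = j - 1 then u k else 0)) (u j) := fun k => by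
    refine ((hasDerivAt_update_apply u j k).fun_mul
      (hasDerivAt_update_apply u j (k + 1))).congr_deriv ?_
    simp only [Function.update_eq_self]
    split_ifs <;> first | omega | ring
  have hderiv := (HasDerivAt.fun_sum (u := Icc 1 N) fun k _ => hsq k).fun_add
    (HasDerivAt.fun_sum (u := Icc 1 (N - 1)) fun k _ => hmul k)
  rw [pd, hderiv.deriv, sum_add_distrib, sum_ite_eq_of_mem' _ _ _ hj, sum_ite_eq_of_imp_eq_zero,
    sum_ite_eq_of_imp_eq_zero]
  · ring
  all_goals
    intro h
    rw [mem_Icc] at h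
    exact apply_eq_zero_of_notMem_Icc hu0 huN (by rw [mem_Icc]; omega) (by omega)

-- `1 ≤ j` guards against `j = i - 1` holding spuriously at `i = j = 0`.
lemma pi2Biv_mul_eq (u g : ℕ → ℝ) {i j : ℕ} (hj : 1 ≤ j) :
    pi2Biv u i j * g j =
      (if j = i + 1 then u i * u (i + 1) * g (i + 1) else 0)
      - (if j = i - 1 then u (i - 1) * u i * g (i - 1) else 0) := by
  unfold pi2Biv
  split_ifs <;> grind

lemma pi3Biv_eq (u : ℕ → ℝ) {i j : ℕ} (hj : 1 ≤ j) :
    pi3Biv u i j =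
      (if j = i + 1 then u i * u (i + 1) * (u i + u (i + 1)) else 0)
      - (if j = i - 1 then u (i - 1) * u i * (u (i - 1) + u i) else 0)
      + (if j = i + 2 then u i * u (i + 1) * u (i + 2) else 0)
      - (if j = i - 2 then u (i - 2) * u (i - 1) * u i else 0) := by
  unfold pi3Biv
  split_ifs <;> grind

section RowSums

variable {N : ℕ} {u : ℕ → ℝ} {i : ℕ}

lemma sum_pi2Biv_mul (hu0 : u 0 = 0) (huN : u (N + 1) = 0) (hi : i ∈ Icc 1 N) (g : ℕ → ℝ) :
    ∑ j ∈ Icc 1 N, pi2Biv u i j * g j =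
      u i * u (i + 1) * g (i + 1) - u (i - 1) * u i * g (i - 1) := by
  have hi' := mem_Icc.1 hi
  rw [sum_congr rfl fun j hj => pi2Biv_mul_eq u g (mem_Icc.1 hj).1, sum_sub_distrib,
    sum_ite_eq_of_imp_eq_zero, sum_ite_eq_of_imp_eq_zero]
  all_goals
    intro h
    rw [apply_eq_zero_of_notMem_Icc hu0 huN h (by omega)]
    ring

lemma sum_pi3Biv (hu0 : u 0 = 0) (huN : u (N + 1) = 0) (hi : i ∈ Icc 1 N) :
    ∑ j ∈ Icc 1 N, pi3Biv u i j =
      u i * u (i + 1) * (u i + u (i + 1)) - u (i - 1) * u i * (u (i - 1) + u i)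
      + u i * u (i + 1) * u (i + 2) - u (i - 2) * u (i - 1) * u i := by
  have hi' := mem_Icc.1 hi
  rw [sum_congr rfl fun j hj => pi3Biv_eq u (mem_Icc.1 hj).1, sum_sub_distrib, sum_add_distrib,
    sum_sub_distrib, sum_ite_eq_of_imp_eq_zero, sum_ite_eq_of_imp_eq_zero,
    sum_ite_eq_of_imp_eq_zero, sum_ite_eq_of_imp_eq_zero]
  all_goals intro h
  -- for `i ≤ 2` the index `i - 2` truncates to `0`, where `u` vanishes
  · rw [apply_eq_zero_of_notMem_Icc hu0 huN h (by omega)]; ring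
  · by_cases h1 : i + 1 ∈ Icc 1 N
    · rw [apply_eq_zero_of_notMem_Icc hu0 huN h (by rw [mem_Icc] at h1; omega)]; ring
    · rw [apply_eq_zero_of_notMem_Icc hu0 huN h1 (by omega)]; ring
  · rw [apply_eq_zero_of_notMem_Icc hu0 huN h (by omega)]; ring
  · rw [apply_eq_zero_of_notMem_Icc hu0 huN h (by omega)]; ring

end RowSums

/-- The Lenard relation `π₃ ∇H₁ = π₂ ∇H₂` on `ℝ^N` with `u₀ = u_{N+1} = 0`,
`H₁ = ∑ uᵢ`, `H₂ = ∑ uᵢ²/2 + ∑ uᵢuᵢ₊₁`. -/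
theorem lenard_relation (N : ℕ) (u : ℕ → ℝ) (hu0 : u 0 = 0) (huN : u (N + 1) = 0) :
    ∀ i ∈ Finset.Icc 1 N,
      ∑ j ∈ Finset.Icc 1 N,
          pi3Biv u i j * pd (fun v => ∑ k ∈ Finset.Icc 1 N, v k) j u
      = ∑ j ∈ Finset.Icc 1 N,
          pi2Biv u i j * pd (fun v => (∑ k ∈ Finset.Icc 1 N, (v k) ^ 2 / 2)
            + ∑ k ∈ Finset.Icc 1 (N - 1), v k * v (k + 1)) j u := by
  intro i hi
  rw [sum_congr rfl fun j hj => congrArg (pi3Biv u i j * ·) (pd_sum_apply hj u),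
    sum_congr rfl fun j hj =>
      congrArg (pi2Biv u i j * ·) (pd_sum_sq_half_add_sum_mul_succ hu0 huN hj),
    sum_congr rfl fun j _ => mul_one (pi3Biv u i j), sum_pi3Biv hu0 huN hi,
    sum_pi2Biv_mul hu0 huN hi]
  have hi' := mem_Icc.1 hi
  rw [show i + 1 - 1 = i by omega, show i - 1 - 1 = i - 2 by omega, show i - 1 + 1 = i by omega]
  ring
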